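/- One has max(1, limsup_{n→∞} ‖G_n‖^{1/n}) = max(1, max_{0 ≤ j ≤ μ−1} |θ_j|^{1/(μ−j)}). (In other words, the Poincaré–Katz rank of a differential module is computed from the coefficients of the differential equation satisfied by a cyclic vector.) -/

import Mathlib

/-!
Put `S = max_j |θ_j|^{1/(μ-j)}` and weigh the `i`-th basis vector by `S^i`. In these weights the
companion matrix `G₁` has norm `≤ S`, and since `∂` does not increase norms, `G_n` and
`G₁^n - G_n` have weighted norms `≤ S^n` and `≤ S^{n-1}` as soon as `S ≥ 1`. This gives the upper
bound. For the lower bound (`S > 1`) it is enough that `G₁^n` has weighted norm `≥ S^n`: the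
ultrametric inequality then transfers a large entry of `G₁^n` to `G_n`.

If the weighted norm of `G₁^n` were `< S^n`, the entries `d_m = (G₁^m)_{μ-1,0}` would satisfy
`|d_m| t^m → 0` for some `t > 1/S`. They solve the linear recurrence with coefficients `θ`, so
`(1 - ∑ θ_j X^{μ-j}) · ∑ d_m X^m = X^{μ-1}`. Comparing Gauss norms at radius `t`, which are
multiplicative, gives a contradiction: the first factor has Gauss norm `≥ |θ_{j₀}| t^{μ-j₀} > 1`
for the index `j₀` realising `S`, while the second has Gauss norm `≥ |d_{μ-1}| t^{μ-1} = t^{μ-1}`.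
-/

open Filter Topology Finset

def IsFirstArgmax (f : ℕ → ℝ) (n : ℕ) : Prop :=
  (∀ m, f m ≤ f n) ∧ ∀ m < n, f m < f n

theorem exists_isFirstArgmax_of_tendsto_zero {f : ℕ → ℝ} (hf : Tendsto f atTop (𝓝 0)) {m : ℕ}
    (hm : 0 < f m) : ∃ n, IsFirstArgmax f n := by
  classical
  obtain ⟨N, hN⟩ := eventually_atTop.1 (hf.eventually (gt_mem_nhds hm))
  have hmax : ∃ n, ∀ k, f k ≤ f n := by
    obtain ⟨n, -, hn⟩ := (range (N + m + 1)).exists_max_image f ⟨m, mem_range.2 (by omega)⟩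
    refine ⟨n, fun k => ?_⟩
    by_cases hk : k < N + m + 1
    · exact hn k (mem_range.2 hk)
    · exact (hN k (by omega)).le.trans (hn m (mem_range.2 (by omega)))
  refine ⟨Nat.find hmax, Nat.find_spec hmax, fun k hk => ?_⟩
  obtain ⟨j, hj⟩ := not_forall.1 (Nat.find_min hmax hk)
  exact (not_le.1 hj).trans_le (Nat.find_spec hmax j)

theorem exists_lt_of_lt_pow {C S : ℝ} {n : ℕ} (hS : 0 < S) (hC : C < S ^ n) :
    ∃ q ∈ Set.Ioo 0 S, C < q ^ n := by
  have hpow : ∀ᶠ q in 𝓝[<] S, C < q ^ n :=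
    ((continuous_pow n).tendsto S |>.mono_left nhdsWithin_le_nhds).eventually (lt_mem_nhds hC)
  obtain ⟨q, hq, hq'⟩ := (hpow.and (Ioo_mem_nhdsLT hS)).exists
  exact ⟨q, hq', hq⟩

theorem tendsto_mul_pow_rpow_inv {c S : ℝ} (hc : 0 < c) (hS : 0 ≤ S) :
    Tendsto (fun n : ℕ => (c * S ^ n) ^ (n : ℝ)⁻¹) atTop (𝓝 S) := by
  have hc' : Tendsto (fun n : ℕ => c ^ (n : ℝ)⁻¹) atTop (𝓝 1) := by
    simpa using tendsto_const_nhds.rpow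
      (tendsto_inv_atTop_zero.comp tendsto_natCast_atTop_atTop) (Or.inl hc.ne')
  refine (by simpa using hc'.mul_const S : Tendsto _ _ (𝓝 S)).congr' ?_
  filter_upwards [eventually_ge_atTop 1] with n hn
  rw [Real.mul_rpow hc.le (by positivity), Real.pow_rpow_inv_natCast hS (by omega)]

theorem limsup_rpow_inv_le {x : ℕ → ℝ} {c S : ℝ} (hc : 0 < c) (hS : 0 ≤ S) (hx : ∀ n, 0 ≤ x n)
    (h : ∀ᶠ n in atTop, x n ≤ c * S ^ n) :
    limsup (fun n : ℕ => x n ^ (n : ℝ)⁻¹) atTop ≤ S := by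
  have hlim := tendsto_mul_pow_rpow_inv hc hS
  calc limsup (fun n : ℕ => x n ^ (n : ℝ)⁻¹) atTop
      ≤ limsup (fun n : ℕ => (c * S ^ n) ^ (n : ℝ)⁻¹) atTop :=
        limsup_le_limsup (h.mono fun n hn => Real.rpow_le_rpow (hx n) hn (by positivity))
          (isCoboundedUnder_le_of_le atTop fun n => Real.rpow_nonneg (hx n) _)
          hlim.isBoundedUnder_le
    _ = S := hlim.limsup_eq

theorem tendsto_rpow_inv_of_le_of_le {x : ℕ → ℝ} {c₁ c₂ S : ℝ} (hc₁ : 0 < c₁) (hc₂ : 0 < c₂)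
    (hS : 0 ≤ S) (h₁ : ∀ᶠ n in atTop, c₁ * S ^ n ≤ x n) (h₂ : ∀ᶠ n in atTop, x n ≤ c₂ * S ^ n) :
    Tendsto (fun n : ℕ => x n ^ (n : ℝ)⁻¹) atTop (𝓝 S) :=
  tendsto_of_tendsto_of_tendsto_of_le_of_le' (tendsto_mul_pow_rpow_inv hc₁ hS)
    (tendsto_mul_pow_rpow_inv hc₂ hS)
    (h₁.mono fun n hn => Real.rpow_le_rpow (by positivity) hn (by positivity))
    ((h₁.and h₂).mono fun n hn =>
      Real.rpow_le_rpow ((by positivity : 0 ≤ c₁ * S ^ n).trans hn.1) hn.2 (by positivity))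

theorem le_iSup_rpow_inv_pow {ι : Type*} [Finite ι] {a : ι → ℝ} {k : ι → ℕ}
    (ha : ∀ i, 0 ≤ a i) (hk : ∀ i, k i ≠ 0) (i : ι) :
    a i ≤ (⨆ i, a i ^ (k i : ℝ)⁻¹) ^ k i :=
  calc a i = (a i ^ (k i : ℝ)⁻¹) ^ k i := (Real.rpow_inv_natCast_pow (ha i) (hk i)).symm
    _ ≤ _ := pow_le_pow_left₀ (Real.rpow_nonneg (ha i) _)
        (le_ciSup (f := fun i => a i ^ (k i : ℝ)⁻¹) (Set.finite_range _).bddAbove i) _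

theorem exists_eq_iSup_rpow_inv_pow {ι : Type*} [Finite ι] [Nonempty ι] {a : ι → ℝ}
    {k : ι → ℕ} (ha : ∀ i, 0 ≤ a i) (hk : ∀ i, k i ≠ 0) :
    ∃ i, a i = (⨆ i, a i ^ (k i : ℝ)⁻¹) ^ k i := by
  obtain ⟨i, hi⟩ := exists_eq_ciSup_of_finite (f := fun i => a i ^ (k i : ℝ)⁻¹)
  exact ⟨i, by rw [← hi, Real.rpow_inv_natCast_pow (ha i) (hk i)]⟩

namespace PowerSeries

variable {F : Type*} [NormedField F] [IsUltrametricDist F]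

theorem norm_coeff_mul_of_isFirstArgmax {φ ψ : F⟦X⟧} {t : ℝ} (ht : 0 < t) {k n : ℕ}
    (hk : IsFirstArgmax (fun i => ‖coeff i φ‖ * t ^ i) k)
    (hn : IsFirstArgmax (fun j => ‖coeff j ψ‖ * t ^ j) n)
    (hφ : coeff k φ ≠ 0) (hψ : coeff n ψ ≠ 0) :
    ‖coeff (k + n) (φ * ψ)‖ * t ^ (k + n) = ‖coeff k φ‖ * t ^ k * (‖coeff n ψ‖ * t ^ n) := by
  have hA : 0 < ‖coeff k φ‖ * t ^ k := by positivity
  have hB : 0 < ‖coeff n ψ‖ * t ^ n := by positivity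
  have hdom : ∀ p ∈ antidiagonal (k + n), p ≠ (k, n) →
      ‖coeff p.1 φ * coeff p.2 ψ‖ < ‖coeff k φ * coeff n ψ‖ := by
    rintro ⟨i, j⟩ hij hne
    rw [HasAntidiagonal.mem_antidiagonal] at hij
    have hlt : ‖coeff i φ‖ * t ^ i * (‖coeff j ψ‖ * t ^ j)
        < ‖coeff k φ‖ * t ^ k * (‖coeff n ψ‖ * t ^ n) := by
      rcases lt_or_gt_of_ne (fun hik : i = k => hne (by simp only [Prod.mk.injEq]; omega))
        with hi | hi
      · exact (mul_le_mul_of_nonneg_left (hn.1 j) (by positivity)).trans_lt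
          (mul_lt_mul_of_pos_right (hk.2 i hi) hB)
      · exact (mul_le_mul_of_nonneg_right (hk.1 i) (by positivity)).trans_lt
          (mul_lt_mul_of_pos_left (hn.2 j (by omega)) hA)
    have htij : t ^ i * t ^ j = t ^ k * t ^ n := by rw [← pow_add, ← pow_add, hij]
    rw [norm_mul, norm_mul]
    refine lt_of_mul_lt_mul_right (a := t ^ k * t ^ n) ?_ (by positivity)
    calc _ = ‖coeff i φ‖ * t ^ i * (‖coeff j ψ‖ * t ^ j) := by rw [← htij]; ring
      _ < _ := hlt
      _ = _ := by ring
  rw [coeff_mul, IsNonarchimedean.apply_sum_eq_of_lt IsUltrametricDist.isNonarchimedean_norm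
    (fun x => (norm_neg x).symm) (k := (k, n)) (HasAntidiagonal.mem_antidiagonal.2 rfl) hdom,
    norm_mul, pow_add]
  ring

end PowerSeries

namespace LinearRecurrence

open PowerSeries

section CommRing

variable {R : Type*} [CommRing R] (E : LinearRecurrence R)

/-- `X ^ E.order * E.charPoly (X⁻¹)`, as a power series. -/
noncomputable def reversedCharSeries : R⟦X⟧ :=
  1 - ∑ i, C (E.coeffs i) * X ^ (E.order - i)

theorem coeff_reversedCharSeries_of_order_lt {k : ℕ} (hk : E.order < k) :
    coeff k E.reversedCharSeries = 0 := by
  simp only [reversedCharSeries, map_sub, map_sum, coeff_one, coeff_C_mul_X_pow]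
  rw [if_neg (by omega), sum_eq_zero fun i _ => if_neg (by omega), sub_zero]

theorem coeff_reversedCharSeries_order_sub (j : Fin E.order) :
    coeff (E.order - j) E.reversedCharSeries = -E.coeffs j := by
  simp only [reversedCharSeries, map_sub, map_sum, coeff_one, coeff_C_mul_X_pow]
  rw [if_neg (by omega), sum_eq_single j (fun i _ hij => if_neg (by omega)) (by simp), if_pos rfl,
    zero_sub]

variable {E} {u : ℕ → R}

theorem reversedCharSeries_mul_mk (hE : 0 < E.order) (hu : E.IsSolution u)
    (hinit : ∀ m < E.order, u m = if m = E.order - 1 then 1 else 0) :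
    E.reversedCharSeries * PowerSeries.mk u = X ^ (E.order - 1) := by
  ext N
  simp only [reversedCharSeries, sub_mul, one_mul, sum_mul, mul_assoc, map_sub, map_sum,
    coeff_C_mul, coeff_X_pow_mul', coeff_mk, coeff_X_pow]
  rcases lt_or_ge N E.order with hN | hN
  · rw [hinit N hN, sum_eq_zero, sub_zero]
    intro i _
    split_ifs with h
    · rw [hinit _ (by omega), if_neg (by omega), mul_zero]
    · rw [mul_zero]
  · obtain ⟨m, rfl⟩ := Nat.exists_eq_add_of_le' hN
    rw [hu m, if_neg (by omega), sub_eq_zero]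
    refine sum_congr rfl fun i _ => ?_
    have := i.isLt
    rw [if_pos (by omega), show m + E.order - (E.order - i) = m + i by omega]

end CommRing

variable {F : Type*} [NormedField F] [IsUltrametricDist F] {E : LinearRecurrence F} {u : ℕ → F}

theorem IsSolution.not_tendsto_norm_mul_pow (hu : E.IsSolution u)
    (hinit : ∀ m < E.order, u m = if m = E.order - 1 then 1 else 0) {t : ℝ} (ht : 0 < t)
    {j : Fin E.order} (hj : 1 < ‖E.coeffs j‖ * t ^ (E.order - j)) :
    ¬ Tendsto (fun m => ‖u m‖ * t ^ m) atTop (𝓝 0) := by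
  intro hdecay
  have hE : 0 < E.order := j.pos
  have hφ : Tendsto (fun k => ‖coeff k E.reversedCharSeries‖ * t ^ k) atTop (𝓝 0) :=
    tendsto_const_nhds.congr' <| eventually_atTop.2 ⟨E.order + 1, fun k hk => by
      dsimp only
      rw [E.coeff_reversedCharSeries_of_order_lt (by omega), norm_zero, zero_mul]⟩
  have hφj : ‖coeff (E.order - j) E.reversedCharSeries‖ * t ^ (E.order - j)
      = ‖E.coeffs j‖ * t ^ (E.order - j) := by
    rw [E.coeff_reversedCharSeries_order_sub, norm_neg]
  have hψ : Tendsto (fun m => ‖coeff m (PowerSeries.mk u)‖ * t ^ m) atTop (𝓝 0) := by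
    simpa using hdecay
  have hψlast : ‖coeff (E.order - 1) (PowerSeries.mk u)‖ * t ^ (E.order - 1)
      = t ^ (E.order - 1) := by
    rw [coeff_mk, hinit _ (by omega), if_pos rfl, norm_one, one_mul]
  obtain ⟨k, hk⟩ := exists_isFirstArgmax_of_tendsto_zero hφ (hφj ▸ one_pos.trans hj)
  obtain ⟨n, hn⟩ := exists_isFirstArgmax_of_tendsto_zero hψ (hψlast ▸ pow_pos ht _)
  have hW : 1 < ‖coeff k E.reversedCharSeries‖ * t ^ k := hj.trans_le (hφj ▸ hk.1 _)
  have hV : t ^ (E.order - 1) ≤ ‖coeff n (PowerSeries.mk u)‖ * t ^ n := hψlast ▸ hn.1 _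
  have hmul := norm_coeff_mul_of_isFirstArgmax ht hk hn (fun h => by simp [h] at hW; linarith)
    (fun h => by simp [h] at hV; linarith [pow_pos ht (E.order - 1)])
  rw [reversedCharSeries_mul_mk hE hu hinit, coeff_X_pow] at hmul
  have hle : ‖(if k + n = E.order - 1 then (1 : F) else 0)‖ * t ^ (k + n)
      ≤ t ^ (E.order - 1) := by
    split_ifs with h
    · rw [h, norm_one, one_mul]
    · rw [norm_zero, zero_mul]; positivity
  nlinarith [pow_pos ht (E.order - 1)]

end LinearRecurrence

namespace Matrix

/-- The bound `‖D * A * D⁻¹‖ ≤ C` for `D = diagonal ω`, in the entrywise max norm. -/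
def WeightedLE {ι R : Type*} [Norm R] (ω : ι → ℝ) (C : ℝ) (A : Matrix ι ι R) : Prop :=
  ∀ i j, ω i * ‖A i j‖ ≤ C * ω j

theorem weightedLE_one {ι R : Type*} [NormedRing R] [NormOneClass R] [DecidableEq ι]
    {ω : ι → ℝ} (hω : 0 ≤ ω) : WeightedLE ω 1 (1 : Matrix ι ι R) := fun i j => by
  by_cases hij : i = j
  · subst hij; simp
  · simpa [one_apply_ne hij] using hω j

namespace WeightedLE

variable {ι R : Type*} {ω : ι → ℝ} {C D : ℝ}

section Norm

variable [Norm R] {A : Matrix ι ι R}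

theorem mono (h : WeightedLE ω C A) (hCD : C ≤ D) (hω : 0 ≤ ω) : WeightedLE ω D A :=
  fun i j => (h i j).trans (mul_le_mul_of_nonneg_right hCD (hω j))

theorem map (h : WeightedLE ω C A) {f : R → R} (hf : ∀ x, ‖f x‖ ≤ ‖x‖) (hω : 0 ≤ ω) :
    WeightedLE ω C (A.map f) := fun i j =>
  (mul_le_mul_of_nonneg_left (hf _) (hω i)).trans (h i j)

end Norm

section AddGroup

variable [SeminormedAddCommGroup R] [IsUltrametricDist R] {A B : Matrix ι ι R}

theorem add (hA : WeightedLE ω C A) (hB : WeightedLE ω C B) (hω : 0 ≤ ω) :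
    WeightedLE ω C (A + B) := fun i j =>
  calc ω i * ‖(A + B) i j‖ ≤ ω i * max ‖A i j‖ ‖B i j‖ :=
        mul_le_mul_of_nonneg_left (IsUltrametricDist.norm_add_le_max _ _) (hω i)
    _ = max (ω i * ‖A i j‖) (ω i * ‖B i j‖) := mul_max_of_nonneg _ _ (hω i)
    _ ≤ C * ω j := max_le (hA i j) (hB i j)

theorem sub (hA : WeightedLE ω C A) (hB : WeightedLE ω C B) (hω : 0 ≤ ω) :
    WeightedLE ω C (A - B) := by
  have hB' : WeightedLE ω C (-B) := fun i j => by simpa only [neg_apply, norm_neg] using hB i j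
  simpa only [sub_eq_add_neg] using hA.add hB' hω

end AddGroup

section Ring

variable [Fintype ι] [NormedRing R] [IsUltrametricDist R] {A B : Matrix ι ι R}

theorem mul (hA : WeightedLE ω C A) (hB : WeightedLE ω D B) (hC : 0 ≤ C) (hω : 0 ≤ ω) :
    WeightedLE ω (C * D) (A * B) := fun i j => by
  have hterm : ∀ l, ω i * ‖A i l * B l j‖ ≤ C * D * ω j := fun l =>
    calc ω i * ‖A i l * B l j‖ ≤ ω i * ‖A i l‖ * ‖B l j‖ := by
          rw [mul_assoc]; exact mul_le_mul_of_nonneg_left (norm_mul_le _ _) (hω i)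
      _ ≤ C * ω l * ‖B l j‖ := mul_le_mul_of_nonneg_right (hA i l) (norm_nonneg _)
      _ ≤ C * (D * ω j) := by rw [mul_assoc]; exact mul_le_mul_of_nonneg_left (hB l j) hC
      _ = C * D * ω j := by ring
  have : Nonempty ι := ⟨i⟩
  obtain ⟨l, -, hl⟩ := IsUltrametricDist.exists_norm_finsetSum_le univ fun l => A i l * B l j
  exact (mul_le_mul_of_nonneg_left hl (hω i)).trans (hterm l)

variable [NormOneClass R] [DecidableEq ι]

theorem pow (h : WeightedLE ω C A) (hC : 0 ≤ C) (hω : 0 ≤ ω) (n : ℕ) :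
    WeightedLE ω (C ^ n) (A ^ n) := by
  induction n with
  | zero => simpa using weightedLE_one hω
  | succ n ih => simpa only [pow_succ] using ih.mul h (pow_nonneg hC n) hω

theorem pow_of_pow {S : ℝ} {n : ℕ} (h : WeightedLE ω S A) (hn : WeightedLE ω C (A ^ n))
    (hS : 0 ≤ S) (hC : 0 ≤ C) (hω : 0 ≤ ω) (m : ℕ) :
    WeightedLE ω (C ^ (m / n) * S ^ (m % n)) (A ^ m) := by
  have hsplit : A ^ m = (A ^ n) ^ (m / n) * A ^ (m % n) := by
    rw [← pow_mul, ← pow_add, Nat.div_add_mod]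
  rw [hsplit]
  exact (hn.pow hC hω _).mul (h.pow hS hω _) (pow_nonneg hC _) hω

end Ring

end WeightedLE

def companion {R : Type*} [Zero R] [One R] {μ : ℕ} (θ : Fin μ → R) : Matrix (Fin μ) (Fin μ) R :=
  of fun i j => if (j : ℕ) = μ - 1 then θ i else if (i : ℕ) = j + 1 then 1 else 0

section CommSemiring

variable {R : Type*} [CommSemiring R] {μ : ℕ} (hμ : 0 < μ) (θ : Fin μ → R)

theorem companion_mulVec_single_of_lt {j : ℕ} (hj : j + 1 < μ) :
    companion θ *ᵥ Pi.single ⟨j, by omega⟩ 1 = Pi.single ⟨j + 1, hj⟩ 1 := by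
  ext i
  simp only [mulVec_single_one, col_apply, companion, of_apply, Pi.single_apply, Fin.ext_iff]
  rw [if_neg (by omega)]

theorem companion_mulVec_single_last :
    companion θ *ᵥ Pi.single ⟨μ - 1, by omega⟩ 1 = θ := by
  ext i
  simp [companion]

theorem companion_pow_mulVec_single_zero {k : ℕ} (hk : k < μ) :
    companion θ ^ k *ᵥ Pi.single ⟨0, hμ⟩ 1 = Pi.single ⟨k, hk⟩ 1 := by
  induction k with
  | zero => rw [pow_zero, one_mulVec]
  | succ k ih =>
    rw [pow_succ', ← mulVec_mulVec, ih (by omega), companion_mulVec_single_of_lt θ hk]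

theorem companion_pow_add_mulVec (m : ℕ) :
    companion θ ^ (m + μ) *ᵥ Pi.single ⟨0, hμ⟩ 1
      = ∑ i, θ i • (companion θ ^ (m + i) *ᵥ Pi.single ⟨0, hμ⟩ 1) := by
  have hpow : companion θ ^ μ *ᵥ Pi.single ⟨0, hμ⟩ 1 = θ := by
    obtain ⟨ν, rfl⟩ : ∃ ν, μ = ν + 1 := ⟨μ - 1, by omega⟩
    rw [pow_succ', ← mulVec_mulVec, companion_pow_mulVec_single_zero _ θ (Nat.lt_succ_self ν)]
    exact companion_mulVec_single_last hμ θ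
  have hθ : θ = ∑ i, θ i • Pi.single i 1 := by
    ext k; simp [Finset.sum_apply, Pi.single_apply]
  rw [pow_add, ← mulVec_mulVec, hpow]
  calc companion θ ^ m *ᵥ θ = companion θ ^ m *ᵥ ∑ i, θ i • Pi.single i 1 := congrArg _ hθ
    _ = _ := by
      rw [mulVec_sum]
      refine sum_congr rfl fun i _ => ?_
      rw [mulVec_smul, pow_add, ← mulVec_mulVec, companion_pow_mulVec_single_zero hμ θ i.isLt]

theorem isSolution_companion_pow_apply :
    (⟨μ, θ⟩ : LinearRecurrence R).IsSolution
      fun m => (companion θ ^ m) ⟨μ - 1, by omega⟩ ⟨0, hμ⟩ := fun m => by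
  simpa [mulVec_single_one, Finset.sum_apply] using
    congrFun (companion_pow_add_mulVec hμ θ m) ⟨μ - 1, by omega⟩

theorem companion_pow_apply_zero_of_lt {m : ℕ} (hm : m < μ) :
    (companion θ ^ m) ⟨μ - 1, by omega⟩ ⟨0, hμ⟩ = if m = μ - 1 then 1 else 0 := by
  have := congrFun (companion_pow_mulVec_single_zero hμ θ hm) ⟨μ - 1, by omega⟩
  simp only [mulVec_single_one, col_apply, Pi.single_apply, Fin.ext_iff] at this
  rw [this]
  exact if_congr eq_comm rfl rfl

end CommSemiring

theorem weightedLE_companion {R : Type*} [NormedRing R] [NormOneClass R] {μ : ℕ}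
    {θ : Fin μ → R} {S : ℝ} (hS : 0 ≤ S) (hθ : ∀ i, ‖θ i‖ ≤ S ^ (μ - i)) :
    WeightedLE (fun i : Fin μ => S ^ (i : ℕ)) S (companion θ) := by
  intro i j
  simp only [companion, of_apply]
  split_ifs with hj hi
  · calc S ^ (i : ℕ) * ‖θ i‖ ≤ S ^ (i : ℕ) * S ^ (μ - i) :=
          mul_le_mul_of_nonneg_left (hθ i) (by positivity)
      _ = S * S ^ (j : ℕ) := by rw [← pow_add, ← pow_succ', hj]; congr 1; omega
  · rw [norm_one, mul_one, hi, pow_succ']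
  · rw [norm_zero, mul_zero]; positivity

theorem pow_le_of_weightedLE_companion_pow {F : Type*} [NormedField F] [IsUltrametricDist F]
    {μ : ℕ} {θ : Fin μ → F} {S C : ℝ} {n : ℕ} (hS : 0 < S) (hθ : ∀ i, ‖θ i‖ ≤ S ^ (μ - i))
    {j : Fin μ} (hj : ‖θ j‖ = S ^ (μ - j)) (hn : 0 < n)
    (h : WeightedLE (fun i : Fin μ => S ^ (i : ℕ)) C (companion θ ^ n)) : S ^ n ≤ C := by
  by_contra! hC
  have hμ : 0 < μ := j.pos
  have hω : 0 ≤ fun i : Fin μ => S ^ (i : ℕ) := fun i => by positivity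
  have hC0 : 0 ≤ C := by
    have h00 := h ⟨0, hμ⟩ ⟨0, hμ⟩
    simp only [pow_zero, one_mul, mul_one] at h00
    exact (norm_nonneg _).trans h00
  -- The radius `t = q⁻¹` satisfies `1/S < t < C^{-1/n}`: there the reversed characteristic series
  -- has a coefficient of weight `> 1`, while the entries of `companion θ ^ m` decay like
  -- `(C t^n)^{m/n}`.
  obtain ⟨q, ⟨hq, hqS⟩, hCq⟩ := exists_lt_of_lt_pow hS hC
  have ht : 0 < q⁻¹ := inv_pos.2 hq
  have hSt : 1 < S * q⁻¹ := by rwa [← div_eq_mul_inv, one_lt_div hq]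
  have hCt : C * q⁻¹ ^ n < 1 := by
    rwa [inv_pow, ← div_eq_mul_inv, div_lt_one (pow_pos hq n)]
  have hpow := (weightedLE_companion hS.le hθ).pow_of_pow h hS.le hC0 hω
  refine (isSolution_companion_pow_apply hμ θ).not_tendsto_norm_mul_pow
    (fun m hm => companion_pow_apply_zero_of_lt hμ θ hm) ht (j := j) ?_ ?_
  · show 1 < ‖θ j‖ * q⁻¹ ^ (μ - j)
    rw [hj, ← mul_pow]
    exact one_lt_pow₀ hSt (by omega)
  · have hbound : ∀ m, ‖(companion θ ^ m) ⟨μ - 1, by omega⟩ ⟨0, hμ⟩‖ * q⁻¹ ^ m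
        ≤ (C * q⁻¹ ^ n) ^ (m / n) * ((S * q⁻¹) ^ n / S ^ (μ - 1)) := by
      intro m
      have hm := hpow m ⟨μ - 1, by omega⟩ ⟨0, hμ⟩
      simp only [pow_zero, mul_one] at hm
      have hsplit : q⁻¹ ^ m = (q⁻¹ ^ n) ^ (m / n) * q⁻¹ ^ (m % n) := by
        rw [← pow_mul, ← pow_add, Nat.div_add_mod]
      rw [← mul_div_assoc, le_div_iff₀ (by positivity)]
      calc _ = S ^ (μ - 1) * ‖(companion θ ^ m) ⟨μ - 1, by omega⟩ ⟨0, hμ⟩‖ * q⁻¹ ^ m := by ring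
        _ ≤ C ^ (m / n) * S ^ (m % n) * q⁻¹ ^ m := mul_le_mul_of_nonneg_right hm (by positivity)
        _ = (C * q⁻¹ ^ n) ^ (m / n) * (S * q⁻¹) ^ (m % n) := by rw [hsplit]; ring
        _ ≤ _ := mul_le_mul_of_nonneg_left
          (pow_le_pow_right₀ hSt.le (Nat.mod_lt _ hn).le) (by positivity)
    have hgeom : Tendsto (fun m => (C * q⁻¹ ^ n) ^ (m / n) * ((S * q⁻¹) ^ n / S ^ (μ - 1)))
        atTop (𝓝 0) := by
      simpa using ((tendsto_pow_atTop_nhds_zero_of_lt_one (by positivity) hCt).comp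
        (Nat.tendsto_div_const_atTop hn.ne')).mul_const ((S * q⁻¹) ^ n / S ^ (μ - 1))
    exact squeeze_zero (fun m => by positivity) hbound hgeom

section Recursion

variable {ι R : Type*} [Fintype ι] [NormedRing R] [IsUltrametricDist R]
  {ω : ι → ℝ} {S : ℝ} {A : Matrix ι ι R} {dd : R → R} {G : ℕ → Matrix ι ι R}

theorem weightedLE_of_eq_mul_add_map (hω : 0 ≤ ω) (hS : 1 ≤ S) (hA : WeightedLE ω S A)
    (hdd : ∀ x, ‖dd x‖ ≤ ‖x‖) (hG1 : G 1 = A)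
    (hGsucc : ∀ n, 1 ≤ n → G (n + 1) = A * G n + (G n).map dd) :
    ∀ n, 1 ≤ n → WeightedLE ω (S ^ n) (G n) := by
  intro n hn
  induction n, hn using Nat.le_induction with
  | base => rwa [hG1, pow_one]
  | succ n hn ih =>
    rw [hGsucc n hn, pow_succ']
    exact (hA.mul ih (by linarith) hω).add
      ((ih.map hdd hω).mono (le_mul_of_one_le_left (by positivity) hS) hω) hω

theorem weightedLE_pow_sub_of_eq_mul_add_map [DecidableEq ι] (hω : 0 ≤ ω) (hS : 1 ≤ S)
    (hA : WeightedLE ω S A) (hdd : ∀ x, ‖dd x‖ ≤ ‖x‖) (hG1 : G 1 = A)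
    (hGsucc : ∀ n, 1 ≤ n → G (n + 1) = A * G n + (G n).map dd) (n : ℕ) :
    WeightedLE ω (S ^ n) (A ^ (n + 1) - G (n + 1)) := by
  induction n with
  | zero =>
    rw [zero_add, pow_one, hG1, sub_self]
    intro i j
    simpa using hω j
  | succ n ih =>
    have hrec : A ^ (n + 1 + 1) - G (n + 1 + 1)
        = A * (A ^ (n + 1) - G (n + 1)) - (G (n + 1)).map dd := by
      rw [hGsucc (n + 1) (by omega), pow_succ' A (n + 1), mul_sub]
      abel
    have hprod : WeightedLE ω (S ^ (n + 1)) (A * (A ^ (n + 1) - G (n + 1))) := by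
      rw [pow_succ']; exact hA.mul ih (by linarith) hω
    rw [hrec]
    exact hprod.sub
      ((weightedLE_of_eq_mul_add_map hω hS hA hdd hG1 hGsucc (n + 1) (by omega)).map hdd hω) hω

end Recursion

section PowWeights

variable {R : Type*} [SeminormedAddGroup R] {μ : ℕ} {S C : ℝ} {M : Matrix (Fin μ) (Fin μ) R}

theorem WeightedLE.norm_le (hS : 1 ≤ S) (h : WeightedLE (fun i : Fin μ => S ^ (i : ℕ)) C M)
    (i j : Fin μ) : ‖M i j‖ ≤ S ^ (μ - 1) * C := by
  have hSj : 0 < S ^ (j : ℕ) := by positivity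
  have hC : 0 ≤ C := nonneg_of_mul_nonneg_left
    ((by positivity : 0 ≤ S ^ (i : ℕ) * ‖M i j‖).trans (h i j)) hSj
  calc ‖M i j‖ ≤ S ^ (i : ℕ) * ‖M i j‖ :=
        le_mul_of_one_le_left (norm_nonneg _) (one_le_pow₀ hS)
    _ ≤ C * S ^ (j : ℕ) := h i j
    _ ≤ C * S ^ (μ - 1) := mul_le_mul_of_nonneg_left (pow_le_pow_right₀ hS (by omega)) hC
    _ = S ^ (μ - 1) * C := mul_comm _ _

theorem weightedLE_of_norm_le (hS : 1 ≤ S) (h : ∀ i j, S ^ (μ - 1) * ‖M i j‖ ≤ C) :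
    WeightedLE (fun i : Fin μ => S ^ (i : ℕ)) C M := fun i j =>
  calc S ^ (i : ℕ) * ‖M i j‖ ≤ S ^ (μ - 1) * ‖M i j‖ :=
        mul_le_mul_of_nonneg_right (pow_le_pow_right₀ hS (by omega)) (norm_nonneg _)
    _ ≤ C := h i j
    _ ≤ C * S ^ (j : ℕ) := le_mul_of_one_le_right
        ((by positivity : 0 ≤ S ^ (μ - 1) * ‖M i j‖).trans (h i j)) (one_le_pow₀ hS)

end PowWeights

variable {F : Type*} [NormedField F] [IsUltrametricDist F] {μ : ℕ} {θ : Fin μ → F}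
  {dd : F → F} {G : ℕ → Matrix (Fin μ) (Fin μ) F}

theorem iSup_norm_le_of_eq_companion_mul_add_map {T : ℝ} (hT : 1 ≤ T)
    (hθ : ∀ j, ‖θ j‖ ≤ T ^ (μ - j)) (hdd : ∀ x, ‖dd x‖ ≤ ‖x‖) (hG1 : G 1 = companion θ)
    (hGsucc : ∀ n, 1 ≤ n → G (n + 1) = companion θ * G n + (G n).map dd) {n : ℕ} (hn : 1 ≤ n) :
    ⨆ p : Fin μ × Fin μ, ‖G n p.1 p.2‖ ≤ T ^ (μ - 1) * T ^ n :=
  Real.iSup_le (fun p => (weightedLE_of_eq_mul_add_map (fun i => by positivity) hT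
    (weightedLE_companion (by linarith) hθ) hdd hG1 hGsucc n hn).norm_le hT p.1 p.2)
    (by positivity)

theorem le_iSup_norm_of_eq_companion_mul_add_map {S : ℝ} (hS : 1 < S)
    (hθ : ∀ j, ‖θ j‖ ≤ S ^ (μ - j)) {j₀ : Fin μ} (hj₀ : ‖θ j₀‖ = S ^ (μ - j₀))
    (hdd : ∀ x, ‖dd x‖ ≤ ‖x‖) (hG1 : G 1 = companion θ)
    (hGsucc : ∀ n, 1 ≤ n → G (n + 1) = companion θ * G n + (G n).map dd) {n : ℕ} (hn : 1 ≤ n) :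
    (S * S ^ (μ - 1))⁻¹ * S ^ n ≤ ⨆ p : Fin μ × Fin μ, ‖G n p.1 p.2‖ := by
  obtain ⟨m, rfl⟩ := Nat.exists_eq_add_of_le' hn
  have hω : 0 ≤ fun i : Fin μ => S ^ (i : ℕ) := fun i => by positivity
  obtain ⟨i, j, hij⟩ : ∃ i j, S ^ m < S ^ (μ - 1) * ‖G (m + 1) i j‖ := by
    by_contra! h
    have hpow := (weightedLE_pow_sub_of_eq_mul_add_map hω hS.le
      (weightedLE_companion (by linarith) hθ) hdd hG1 hGsucc m).add
      (weightedLE_of_norm_le hS.le h) hω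
    rw [sub_add_cancel] at hpow
    exact (pow_lt_pow_right₀ hS m.lt_succ_self).not_ge
      (pow_le_of_weightedLE_companion_pow (by linarith) hθ hj₀ m.succ_pos hpow)
  calc (S * S ^ (μ - 1))⁻¹ * S ^ (m + 1) = S ^ m / S ^ (μ - 1) := by field_simp; ring
    _ ≤ ‖G (m + 1) i j‖ := (div_le_iff₀' (by positivity)).2 hij.le
    _ ≤ _ := le_ciSup (f := fun p : Fin μ × Fin μ => ‖G (m + 1) p.1 p.2‖)
      (Set.finite_range _).bddAbove (i, j)

end Matrix

theorem stmt_1_general {F : Type*} [NormedField F] [IsUltrametricDist F]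
    (dd : F → F)
    (hddnorm : ∀ f : F, ‖dd f‖ ≤ ‖f‖)
    (μ : ℕ) (θ : Fin μ → F)
    (G1 : Matrix (Fin μ) (Fin μ) F)
    (hG1 : ∀ i j : Fin μ, G1 i j =
      if (j : ℕ) = μ - 1 then θ i else if (i : ℕ) = (j : ℕ) + 1 then 1 else 0)
    (G : ℕ → Matrix (Fin μ) (Fin μ) F)
    (hGone : G 1 = G1)
    (hGsucc : ∀ n : ℕ, 1 ≤ n → G (n + 1) = G1 * G n + (G n).map dd) :
    max 1 (Filter.limsup
        (fun n : ℕ => (⨆ p : Fin μ × Fin μ, ‖G n p.1 p.2‖) ^ ((n : ℝ)⁻¹)) Filter.atTop)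
      = max 1 (⨆ j : Fin μ, ‖θ j‖ ^ (((μ : ℝ) - ((j : ℕ) : ℝ))⁻¹)) := by
  obtain rfl : G1 = Matrix.companion θ := Matrix.ext hG1
  have hexp : ∀ j : Fin μ, (μ : ℝ) - ((j : ℕ) : ℝ) = ((μ - j : ℕ) : ℝ) := fun j => by
    rw [Nat.cast_sub j.isLt.le]
  simp only [hexp]
  set S := ⨆ j : Fin μ, ‖θ j‖ ^ ((μ - j : ℕ) : ℝ)⁻¹
  have hθS : ∀ j, ‖θ j‖ ≤ S ^ (μ - j) :=
    le_iSup_rpow_inv_pow (fun j => norm_nonneg _) (fun j => by omega)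
  rcases le_or_gt S 1 with hS1 | hS1
  · have hS0 : 0 ≤ S := Real.iSup_nonneg fun j => Real.rpow_nonneg (norm_nonneg _) _
    have hθ1 : ∀ j, ‖θ j‖ ≤ 1 ^ (μ - j) := fun j =>
      (hθS j).trans (by rw [one_pow]; exact pow_le_one₀ hS0 hS1)
    rw [max_eq_left hS1, max_eq_left (limsup_rpow_inv_le one_pos zero_le_one
      (fun n => Real.iSup_nonneg fun p => norm_nonneg _) (eventually_atTop.2 ⟨1, fun n hn => by
        simpa using Matrix.iSup_norm_le_of_eq_companion_mul_add_map le_rfl hθ1 hddnorm hGone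
          hGsucc hn⟩))]
  · have : Nonempty (Fin μ) :=
      not_isEmpty_iff.1 fun h => by norm_num [S, Real.iSup_of_isEmpty] at hS1
    obtain ⟨j₀, hj₀⟩ := exists_eq_iSup_rpow_inv_pow (a := fun j : Fin μ => ‖θ j‖)
      (k := fun j => μ - j) (fun j => norm_nonneg _) (fun j => by omega)
    rw [(tendsto_rpow_inv_of_le_of_le (by positivity) (by positivity) (by linarith)
      (eventually_atTop.2 ⟨1, fun n => Matrix.le_iSup_norm_of_eq_companion_mul_add_map hS1 hθS hj₀
        hddnorm hGone hGsucc⟩)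
      (eventually_atTop.2 ⟨1, fun n => Matrix.iSup_norm_le_of_eq_companion_mul_add_map hS1.le hθS
        hddnorm hGone hGsucc⟩)).limsup_eq]

/-- Computation of the Poincaré–Katz rank in a cyclic basis:
max(1, limsup ‖Gₙ‖^{1/n}) = max(1, max_j |θ_j|^{1/(μ−j)}). -/
theorem stmt_1 {F : Type*} [NormedField F] [IsUltrametricDist F] [CompleteSpace F]
    (dd : F → F)
    (hddadd : ∀ f g : F, dd (f + g) = dd f + dd g)
    (hddmul : ∀ f g : F, dd (f * g) = f * dd g + g * dd f)
    (hddnorm : ∀ f : F, ‖dd f‖ ≤ ‖f‖)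
    (μ : ℕ) (hμ : 1 ≤ μ) (θ : Fin μ → F)
    (G1 : Matrix (Fin μ) (Fin μ) F)
    (hG1 : ∀ i j : Fin μ, G1 i j =
      if (j : ℕ) = μ - 1 then θ i else if (i : ℕ) = (j : ℕ) + 1 then 1 else 0)
    (G : ℕ → Matrix (Fin μ) (Fin μ) F)
    (hGone : G 1 = G1)
    (hGsucc : ∀ n : ℕ, 1 ≤ n → G (n + 1) = G1 * G n + (G n).map dd) :
    max 1 (Filter.limsup
        (fun n : ℕ => (⨆ p : Fin μ × Fin μ, ‖G n p.1 p.2‖) ^ ((n : ℝ)⁻¹)) Filter.atTop)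
      = max 1 (⨆ j : Fin μ, ‖θ j‖ ^ (((μ : ℝ) - ((j : ℕ) : ℝ))⁻¹)) :=
  stmt_1_general dd hddnorm μ θ G1 hG1 G hGone hGsucc
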